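/- arXiv:1308.1138 — 2 statements merged into one kernel-verified Lean document; each statement's English description precedes it below -/
import Mathlib

section
/- If t_1, …, t_n are strongly normalising terms of λ^vec, then for any algebraic context F, the term F(t_1,…,t_n) is strongly normalising, where algebraic contexts are generated by F ::= t_i | F + G | α·F | 0. -/
/-!
Formalization of the vectorial λ-calculus (Arrighi, Díaz-Caro, Valiron):
syntax of types and terms, type equivalence, typing rules, reduction, etc.
-/

universe u

/-- Types of λ^vec. Type variables come in two kinds, tagged by a `Bool`:
`true` for unit type variables 𝕌, `false` for general type variables 𝕏.
`fa b n U` is ∀X.U where X is the variable of kind `b` with index `n`. -/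
inductive VType (S : Type u) : Type u where
  | uvar : ℕ → VType S
  | gvar : ℕ → VType S
  | arrow : VType S → VType S → VType S
  | fa : Bool → ℕ → VType S → VType S
  | smul : S → VType S → VType S
  | add : VType S → VType S → VType S

namespace VType

variable {S : Type u}

/-- Unit types: U ::= 𝕌 | U → T | ∀𝕌.U | ∀𝕏.U -/
inductive IsUnit : VType S → Prop where
  | uvar (n : ℕ) : IsUnit (uvar n)
  | arrow {U T : VType S} : IsUnit U → IsUnit (arrow U T)
  | fa {b : Bool} {n : ℕ} {U : VType S} : IsUnit U → IsUnit (fa b n U)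

/-- 𝒰 ::= U | 𝕏 : a unit type or a general type variable. -/
def IsUG (T : VType S) : Prop := IsUnit T ∨ ∃ n, T = gvar n

/-- Free type variables (as kind-index pairs). -/
def freeTV : VType S → Set (Bool × ℕ)
  | uvar n => {(true, n)}
  | gvar n => {(false, n)}
  | arrow U T => freeTV U ∪ freeTV T
  | fa b n U => freeTV U \ {(b, n)}
  | smul _ T => freeTV T
  | add T R => freeTV T ∪ freeTV R

/-- Substitution of the type variable `v` by the type `A`;
it distributes homomorphically through `smul` and `add`. -/
def substT : VType S → (Bool × ℕ) → VType S → VType S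
  | uvar n, v, A => if v = (true, n) then A else uvar n
  | gvar n, v, A => if v = (false, n) then A else gvar n
  | arrow U T, v, A => arrow (substT U v A) (substT T v A)
  | fa b n U, v, A => if v = (b, n) then fa b n U else fa b n (substT U v A)
  | smul a T, v, A => smul a (substT T v A)
  | add T R, v, A => add (substT T v A) (substT R v A)

/-- The kind condition: a unit variable may only be substituted by a unit type. -/
def kindOK (v : Bool × ℕ) (A : VType S) : Prop := v.1 = true → IsUnit A

/-- ∀X⃗.T for a vector of variables. -/
def faMany (Xs : List (Bool × ℕ)) (T : VType S) : VType S :=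
  Xs.foldr (fun v T => fa v.1 v.2 T) T

/-- T[A⃗/X⃗] for vectors of variables and types. -/
def substMany (T : VType S) (Xs : List (Bool × ℕ)) (As : List (VType S)) : VType S :=
  (Xs.zip As).foldl (fun T p => substT T p.1 p.2) T

/-- The linear combination Σᵢ αᵢ·Tᵢ of a list of scalar–type pairs.
(The value on the empty list is irrelevant junk; it is only used on
nonempty lists.) -/
def ssumL [CommRing S] : List (S × VType S) → VType S
  | [] => smul 0 (uvar 0)
  | [p] => smul p.1 p.2
  | p :: l => add (smul p.1 p.2) (ssumL l)

end VType

/-- Equivalence of types: the smallest congruence satisfying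
1·T ≡ T, α·(β·T) ≡ (α×β)·T, α·T + α·R ≡ α·(T+R), α·T + β·T ≡ (α+β)·T,
commutativity and associativity of +. -/
inductive TEq {S : Type u} [CommRing S] : VType S → VType S → Prop where
  | refl (T : VType S) : TEq T T
  | symm {T R : VType S} : TEq T R → TEq R T
  | trans {T R Q : VType S} : TEq T R → TEq R Q → TEq T Q
  | oneSmul (T : VType S) : TEq (VType.smul 1 T) T
  | smulSmul (a b : S) (T : VType S) :
      TEq (VType.smul a (VType.smul b T)) (VType.smul (a * b) T)
  | smulAdd (a : S) (T R : VType S) :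
      TEq (VType.add (VType.smul a T) (VType.smul a R)) (VType.smul a (VType.add T R))
  | addSmul (a b : S) (T : VType S) :
      TEq (VType.add (VType.smul a T) (VType.smul b T)) (VType.smul (a + b) T)
  | comm (T R : VType S) : TEq (VType.add T R) (VType.add R T)
  | assoc (T R Q : VType S) :
      TEq (VType.add T (VType.add R Q)) (VType.add (VType.add T R) Q)
  | arrowCong {U V T R : VType S} : TEq U V → TEq T R → TEq (VType.arrow U T) (VType.arrow V R)
  | faCong (b : Bool) (n : ℕ) {T R : VType S} : TEq T R → TEq (VType.fa b n T) (VType.fa b n R)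
  | smulCong (a : S) {T R : VType S} : TEq T R → TEq (VType.smul a T) (VType.smul a R)
  | addCong {T T' R R' : VType S} :
      TEq T T' → TEq R R' → TEq (VType.add T R) (VType.add T' R')

/-- Terms of λ^vec. -/
inductive VTerm (S : Type u) : Type u where
  | var : ℕ → VTerm S
  | lam : ℕ → VTerm S → VTerm S
  | app : VTerm S → VTerm S → VTerm S
  | zero : VTerm S
  | smul : S → VTerm S → VTerm S
  | add : VTerm S → VTerm S → VTerm S

namespace VTerm

variable {S : Type u}

/-- Basis terms: variables and λ-abstractions. -/
def IsBasis : VTerm S → Prop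
  | var _ => True
  | lam _ _ => True
  | _ => False

/-- Free term variables. -/
def freeV : VTerm S → Set ℕ
  | var x => {x}
  | lam x t => freeV t \ {x}
  | app t r => freeV t ∪ freeV r
  | zero => ∅
  | smul _ t => freeV t
  | add t r => freeV t ∪ freeV r

def ClosedTerm (t : VTerm S) : Prop := freeV t = ∅

/-- Capture-avoiding substitution of the basis term `b` for the variable `x`;
it distributes homomorphically through linear combinations. -/
def substV : VTerm S → ℕ → VTerm S → VTerm S
  | var y, x, b => if y = x then b else var y
  | lam y t, x, b => if y = x then lam y t else lam y (substV t x b)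
  | app t r, x, b => app (substV t x b) (substV r x b)
  | zero, _, _ => zero
  | smul a t, x, b => smul a (substV t x b)
  | add t r, x, b => add (substV t x b) (substV r x b)

end VTerm

/-- Typing contexts: partial assignments of (unit) types to term variables. -/
def Ctx (S : Type u) := ℕ → Option (VType S)

def Ctx.extend {S : Type u} (Γ : Ctx S) (x : ℕ) (U : VType S) : Ctx S :=
  fun y => if y = x then some U else Γ y

/-- Free type variables of a context. -/
def Ctx.freeTV {S : Type u} (Γ : Ctx S) : Set (Bool × ℕ) :=
  {v | ∃ x U, Γ x = some U ∧ v ∈ VType.freeTV U}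

/-- Type substitution applied pointwise to a context. -/
def Ctx.substT {S : Type u} (Γ : Ctx S) (v : Bool × ℕ) (A : VType S) : Ctx S :=
  fun x => (Γ x).map (fun U => VType.substT U v A)

/-- The typing rules of the vectorial type system:
(ax), (0_I), (→_I), (→_E), (∀_I), (∀_E), (α_I), (+_I), (≡). -/
inductive Typing {S : Type u} [CommRing S] : Ctx S → VTerm S → VType S → Prop where
  | ax {Γ : Ctx S} {x : ℕ} {U : VType S} :
      Γ x = some U → VType.IsUnit U → Typing Γ (VTerm.var x) U
  | zeroI {Γ : Ctx S} {t : VTerm S} {T : VType S} :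
      Typing Γ t T → Typing Γ VTerm.zero (VType.smul 0 T)
  | arrI {Γ : Ctx S} {x : ℕ} {U : VType S} {t : VTerm S} {T : VType S} :
      VType.IsUnit U → Typing (Γ.extend x U) t T →
      Typing Γ (VTerm.lam x t) (VType.arrow U T)
  | arrE {Γ : Ctx S} {t r : VTerm S} (U : VType S) (Xs : List (Bool × ℕ))
      (p : S × VType S) (ps : List (S × VType S))
      (q : S × List (VType S)) (qs : List (S × List (VType S))) :
      VType.IsUnit U →
      (∀ w ∈ q :: qs, w.2.length = Xs.length ∧
        ∀ pr ∈ Xs.zip w.2, VType.kindOK pr.1 pr.2) →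
      Typing Γ t (VType.ssumL ((p :: ps).map
        (fun pi => (pi.1, VType.faMany Xs (VType.arrow U pi.2))))) →
      Typing Γ r (VType.ssumL ((q :: qs).map
        (fun qj => (qj.1, VType.substMany U Xs qj.2)))) →
      Typing Γ (VTerm.app t r)
        (VType.ssumL ((p :: ps).flatMap (fun pi => (q :: qs).map
          (fun qj => (pi.1 * qj.1, VType.substMany pi.2 Xs qj.2)))))
  | faI {Γ : Ctx S} {t : VTerm S} (v : Bool × ℕ)
      (p : S × VType S) (ps : List (S × VType S)) :
      v ∉ Γ.freeTV →
      (∀ w ∈ p :: ps, VType.IsUnit w.2) →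
      Typing Γ t (VType.ssumL (p :: ps)) →
      Typing Γ t (VType.ssumL ((p :: ps).map (fun w => (w.1, VType.fa v.1 v.2 w.2))))
  | faE {Γ : Ctx S} {t : VTerm S} (v : Bool × ℕ) (A : VType S)
      (p : S × VType S) (ps : List (S × VType S)) :
      VType.kindOK v A →
      (∀ w ∈ p :: ps, VType.IsUnit w.2) →
      Typing Γ t (VType.ssumL ((p :: ps).map (fun w => (w.1, VType.fa v.1 v.2 w.2)))) →
      Typing Γ t (VType.ssumL ((p :: ps).map (fun w => (w.1, VType.substT w.2 v A))))
  | smulI {Γ : Ctx S} {t : VTerm S} {T : VType S} (a : S) :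
      Typing Γ t T → Typing Γ (VTerm.smul a t) (VType.smul a T)
  | addI {Γ : Ctx S} {t r : VTerm S} {T R : VType S} :
      Typing Γ t T → Typing Γ r R → Typing Γ (VTerm.add t r) (VType.add T R)
  | equiv {Γ : Ctx S} {t : VTerm S} {T R : VType S} :
      Typing Γ t T → TEq T R → Typing Γ t R

/-- AC equivalence of terms (associativity and commutativity of +,
as a congruence). -/
inductive ACEq {S : Type u} : VTerm S → VTerm S → Prop where
  | refl (t : VTerm S) : ACEq t t
  | symm {t r : VTerm S} : ACEq t r → ACEq r t
  | trans {t r u : VTerm S} : ACEq t r → ACEq r u → ACEq t u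
  | comm (t r : VTerm S) : ACEq (VTerm.add t r) (VTerm.add r t)
  | assoc (t r u : VTerm S) :
      ACEq (VTerm.add t (VTerm.add r u)) (VTerm.add (VTerm.add t r) u)
  | lamCong (x : ℕ) {t r : VTerm S} : ACEq t r → ACEq (VTerm.lam x t) (VTerm.lam x r)
  | appCong {t t' r r' : VTerm S} :
      ACEq t t' → ACEq r r' → ACEq (VTerm.app t r) (VTerm.app t' r')
  | smulCong (a : S) {t r : VTerm S} : ACEq t r → ACEq (VTerm.smul a t) (VTerm.smul a r)
  | addCong {t t' r r' : VTerm S} :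
      ACEq t t' → ACEq r r' → ACEq (VTerm.add t r) (VTerm.add t' r')

/-- One-step reduction of λ^vec, labelled by a `Bool` which is `true`
exactly when the underlying rule is a factorisation rule (Group F).
Reduction acts modulo AC of +, and is closed under contexts. -/
inductive Red {S : Type u} [CommRing S] : Bool → VTerm S → VTerm S → Prop where
  -- Group E
  | zeroSmul (t : VTerm S) : Red false (VTerm.smul 0 t) VTerm.zero
  | oneSmul (t : VTerm S) : Red false (VTerm.smul 1 t) t
  | smulZero (a : S) : Red false (VTerm.smul a VTerm.zero) VTerm.zero
  | smulSmul (a b : S) (t : VTerm S) :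
      Red false (VTerm.smul a (VTerm.smul b t)) (VTerm.smul (a * b) t)
  | smulAdd (a : S) (t r : VTerm S) :
      Red false (VTerm.smul a (VTerm.add t r)) (VTerm.add (VTerm.smul a t) (VTerm.smul a r))
  -- Group F
  | factor (a b : S) (t : VTerm S) :
      Red true (VTerm.add (VTerm.smul a t) (VTerm.smul b t)) (VTerm.smul (a + b) t)
  | factor1 (a : S) (t : VTerm S) :
      Red true (VTerm.add (VTerm.smul a t) t) (VTerm.smul (a + 1) t)
  | factor2 (t : VTerm S) : Red true (VTerm.add t t) (VTerm.smul (1 + 1) t)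
  | addZero (t : VTerm S) : Red true (VTerm.add t VTerm.zero) t
  -- Group B
  | beta (x : ℕ) (t b : VTerm S) :
      VTerm.IsBasis b → Red false (VTerm.app (VTerm.lam x t) b) (VTerm.substV t x b)
  -- Group A
  | appAddL (t r u : VTerm S) :
      Red false (VTerm.app (VTerm.add t r) u) (VTerm.add (VTerm.app t u) (VTerm.app r u))
  | appAddR (t r u : VTerm S) :
      Red false (VTerm.app t (VTerm.add r u)) (VTerm.add (VTerm.app t r) (VTerm.app t u))
  | appSmulL (a : S) (t r : VTerm S) :
      Red false (VTerm.app (VTerm.smul a t) r) (VTerm.smul a (VTerm.app t r))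
  | appSmulR (a : S) (t r : VTerm S) :
      Red false (VTerm.app t (VTerm.smul a r)) (VTerm.smul a (VTerm.app t r))
  | appZeroL (t : VTerm S) : Red false (VTerm.app VTerm.zero t) VTerm.zero
  | appZeroR (t : VTerm S) : Red false (VTerm.app t VTerm.zero) VTerm.zero
  -- contextual rules
  | smulCtx {f : Bool} {t r : VTerm S} (a : S) :
      Red f t r → Red f (VTerm.smul a t) (VTerm.smul a r)
  | addCtx {f : Bool} {t r : VTerm S} (u : VTerm S) :
      Red f t r → Red f (VTerm.add u t) (VTerm.add u r)
  | appCtxR {f : Bool} {t r : VTerm S} (u : VTerm S) :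
      Red f t r → Red f (VTerm.app u t) (VTerm.app u r)
  | appCtxL {f : Bool} {t r : VTerm S} (u : VTerm S) :
      Red f t r → Red f (VTerm.app t u) (VTerm.app r u)
  | lamCtx {f : Bool} {t r : VTerm S} (x : ℕ) :
      Red f t r → Red f (VTerm.lam x t) (VTerm.lam x r)
  -- reduction modulo AC of +
  | ac {f : Bool} {t t' r r' : VTerm S} :
      ACEq t t' → Red f t' r' → ACEq r' r → Red f t r

/-- One-step reduction (by any rule). -/
def Red1 {S : Type u} [CommRing S] (t r : VTerm S) : Prop := ∃ f, Red f t r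

/-- Strong normalisation: every reduction sequence from `t` is finite. -/
def SN {S : Type u} [CommRing S] (t : VTerm S) : Prop :=
  Acc (fun a b : VTerm S => Red1 b a) t

/-- Algebraic contexts F(t⃗) ::= tᵢ | F(t⃗)+G(t⃗) | α·F(t⃗) | 0. -/
inductive AlgCtx (S : Type u) : Type u where
  | idx : ℕ → AlgCtx S
  | add : AlgCtx S → AlgCtx S → AlgCtx S
  | smul : S → AlgCtx S → AlgCtx S
  | zero : AlgCtx S

/-- Filling an algebraic context with a list of terms. -/
def AlgCtx.fill {S : Type u} : AlgCtx S → List (VTerm S) → VTerm S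
  | .idx i, ts => ts.getD i VTerm.zero
  | .add F G, ts => VTerm.add (F.fill ts) (G.fill ts)
  | .smul a F, ts => VTerm.smul a (F.fill ts)
  | .zero, _ => VTerm.zero

/-- `t` is not a λ-abstraction. -/
def NotLam {S : Type u} : VTerm S → Prop
  | VTerm.lam _ _ => False
  | _ => True

/-- Closed neutral terms: closed, not an abstraction, and reducing to something. -/
def Neutral {S : Type u} [CommRing S] (t : VTerm S) : Prop :=
  VTerm.ClosedTerm t ∧ NotLam t ∧ ∃ r, Red1 t r

/-- Reducibility candidates: sets of closed terms satisfying RC1–RC4. -/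
def IsRC {S : Type u} [CommRing S] (A : Set (VTerm S)) : Prop :=
  (∀ t ∈ A, VTerm.ClosedTerm t ∧ SN t) ∧
  (∀ t ∈ A, ∀ r, Red1 t r → r ∈ A) ∧
  (∀ t, Neutral t → (∀ r, Red1 t r → r ∈ A) → t ∈ A) ∧
  VTerm.zero ∈ A

/-- The arrow operation on candidates: closure under RC3 and RC4 of the set of
closed `t` with (t)0 ∈ B and (t)b ∈ B for every basis term b ∈ A. -/
inductive arrowSet {S : Type u} [CommRing S] (A B : Set (VTerm S)) : VTerm S → Prop where
  | base {t : VTerm S} : VTerm.ClosedTerm t → VTerm.app t VTerm.zero ∈ B →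
      (∀ b ∈ A, VTerm.IsBasis b → VTerm.app t b ∈ B) → arrowSet A B t
  | neutral {t : VTerm S} : Neutral t → (∀ r, Red1 t r → arrowSet A B r) → arrowSet A B t
  | zero : arrowSet A B VTerm.zero

/-- The sum Σᵢ 𝒜ᵢ of a family of candidates: closure under CC, RC2 and RC3
of the set of algebraic combinations F(t⃗) of terms each in some 𝒜ᵢ. -/
inductive sumSet {S : Type u} [CommRing S] {ι : Type*} (As : ι → Set (VTerm S)) :
    VTerm S → Prop where
  | base (F : AlgCtx S) (ts : List (VTerm S)) :
      (∀ t ∈ ts, ∃ i, t ∈ As i) → sumSet As (F.fill ts)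
  | red {t r : VTerm S} : sumSet As t → Red1 t r → sumSet As r
  | neutral {t : VTerm S} : Neutral t → (∀ r, Red1 t r → sumSet As r) → sumSet As t
  | cc (F : AlgCtx S) (ts : List (VTerm S)) {t : VTerm S} :
      sumSet As (F.fill ts) → t ∈ ts → sumSet As t

/-- The order ⊒ on types (`TGe T R` means T ⊒ R): the smallest reflexive,
transitive, congruent relation with (α+β)·T ⊒ α·T + β·T' whenever some term
can be typed with both α·T and β·T', and T ⊒ T + 0·R. -/
inductive TGe {S : Type u} [CommRing S] : VType S → VType S → Prop where
  | refl (T : VType S) : TGe T T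
  | trans {T R Q : VType S} : TGe T R → TGe R Q → TGe T Q
  | factor {Γ : Ctx S} {t : VTerm S} {a b : S} {T T' : VType S} :
      Typing Γ (VTerm.smul a t) (VType.smul a T) →
      Typing Γ (VTerm.smul b t) (VType.smul b T') →
      TGe (VType.smul (a + b) T) (VType.add (VType.smul a T) (VType.smul b T'))
  | addZero (T R : VType S) : TGe T (VType.add T (VType.smul 0 R))
  | addCong (Q : VType S) {T R : VType S} : TGe T R → TGe (VType.add T Q) (VType.add R Q)
  | smulCong (a : S) {T R : VType S} : TGe T R → TGe (VType.smul a T) (VType.smul a R)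
  | arrowCong (U : VType S) {T R : VType S} :
      TGe T R → TGe (VType.arrow U T) (VType.arrow U R)
  | faCong (b : Bool) (n : ℕ) {T R : VType S} :
      TGe T R → TGe (VType.fa b n T) (VType.fa b n R)

/-- The single-variable relation T ≻^t_{X,Γ} R of Definition 4.3. -/
inductive StepOrd {S : Type u} [CommRing S] (Γ : Ctx S) (t : VTerm S) (X : Bool × ℕ) :
    VType S → VType S → Prop where
  | faI {T R : VType S} (l : List (S × VType S)) :
      l ≠ [] → (∀ p ∈ l, VType.IsUnit p.2) →
      X ∉ Γ.freeTV → Typing Γ t T → Typing Γ t R →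
      TEq T (VType.ssumL l) →
      TEq R (VType.ssumL (l.map (fun p => (p.1, VType.fa X.1 X.2 p.2)))) →
      StepOrd Γ t X T R
  | faE {T R : VType S} (l : List (S × VType S)) (A : VType S) :
      l ≠ [] → (∀ p ∈ l, VType.IsUnit p.2) → VType.kindOK X A →
      X ∉ Γ.freeTV → Typing Γ t T → Typing Γ t R →
      TEq T (VType.ssumL (l.map (fun p => (p.1, VType.fa X.1 X.2 p.2)))) →
      TEq R (VType.ssumL (l.map (fun p => (p.1, VType.substT p.2 X A)))) →
      StepOrd Γ t X T R

/-- The relation T ≽^t_{𝒱,Γ} R of Definition 4.3. -/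
inductive TOrd {S : Type u} [CommRing S] (Γ : Ctx S) (t : VTerm S) :
    Set (Bool × ℕ) → VType S → VType S → Prop where
  | step {X : Bool × ℕ} {T R : VType S} : StepOrd Γ t X T R → TOrd Γ t {X} T R
  | trans {V₁ V₂ : Set (Bool × ℕ)} {T R Q : VType S} :
      TOrd Γ t V₁ T R → TOrd Γ t V₂ R Q → TOrd Γ t (V₁ ∪ V₂) T Q
  | ofEq (V : Set (Bool × ℕ)) {T R : VType S} : TEq T R → TOrd Γ t V T R

/-- Inner sum Σⱼ βⱼ·bⱼ of terms, with the convention that the empty sum is 0. -/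
def tsumI {S : Type u} : List (S × VTerm S) → VTerm S
  | [] => VTerm.zero
  | [p] => VTerm.smul p.1 p.2
  | p :: l => VTerm.add (VTerm.smul p.1 p.2) (tsumI l)

/-- Outer sum of a list of terms. -/
def tsumO {S : Type u} : List (VTerm S) → VTerm S
  | [] => VTerm.zero
  | [t] => t
  | t :: l => VTerm.add t (tsumO l)

/-!
Every term decomposes into an algebraic skeleton (built from `+`, `·` and `0`) whose leaves, the
*atoms*, are variables, abstractions and applications. If all atoms are strongly normalising,
attach to the term the multiset of the reduction ranks of its atoms together with a size
`weight`. A reduction inside an atom, or at an atom's head, replaces that atom by the atoms of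
a reduct, all of strictly smaller rank: the multiset drops in the Dershowitz–Manna order. An
algebraic rule of Group E or F does not add atoms and strictly decreases the weight. Both
quantities are invariant under AC of `+`, so the lexicographic combination is a well-founded
measure decreasing along every reduction.
-/

namespace Multiset

variable {α : Type*} [Preorder α]

theorem isDershowitzMannaLT_of_lt {M N : Multiset α} (h : M < N) : IsDershowitzMannaLT M N := by
  obtain ⟨Z, rfl⟩ := le_iff_exists_add.1 h.le
  refine ⟨M, 0, Z, ?_, (add_zero M).symm, rfl, by simp⟩
  rintro rfl
  exact h.ne (add_zero M).symm

theorem isDershowitzMannaLT_singleton {M : Multiset α} {a : α} (h : ∀ y ∈ M, y < a) :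
    IsDershowitzMannaLT M {a} :=
  ⟨0, M, {a}, singleton_ne_zero a, (zero_add M).symm, (zero_add _).symm,
    fun y hy => ⟨a, mem_singleton_self a, h y hy⟩⟩

theorem IsDershowitzMannaLT.add_left {M N : Multiset α} (P : Multiset α)
    (h : IsDershowitzMannaLT M N) : IsDershowitzMannaLT (P + M) (P + N) := by
  obtain ⟨X, Y, Z, hZ, rfl, rfl, hYZ⟩ := h
  exact ⟨P + X, Y, Z, hZ, (add_assoc P X Y).symm, (add_assoc P X Z).symm, hYZ⟩

end Multiset

open Multiset (IsDershowitzMannaLT)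

namespace VTerm

variable {S : Type u}

def atoms : VTerm S → Multiset (VTerm S)
  | var n => {var n}
  | lam x t => {lam x t}
  | app t r => {app t r}
  | zero => 0
  | smul _ t => atoms t
  | add t r => atoms t + atoms r

def weight : VTerm S → ℕ
  | var _ => 1
  | lam _ t => weight t + 1
  | app t r => weight t + weight r + 1
  | zero => 1
  | smul _ t => 2 * weight t + 1
  | add t r => weight t + weight r + 2

theorem one_le_weight (t : VTerm S) : 1 ≤ weight t := by
  cases t <;> simp [weight]

theorem weight_congr {a b : VTerm S} (h : ACEq a b) : weight a = weight b := by
  induction h <;> simp_all [weight] <;> omega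

instance : IsTrans (VTerm S) ACEq := ⟨fun _ _ _ => ACEq.trans⟩

theorem rel_atoms_of_aceq {a b : VTerm S} (h : ACEq a b) :
    Multiset.Rel ACEq (atoms a) (atoms b) := by
  induction h with
  | refl t => exact Multiset.rel_refl_of_refl_on fun x _ => ACEq.refl x
  | symm _ ih => exact Multiset.rel_flip.2 (ih.mono fun _ _ _ _ h => h.symm)
  | trans _ _ ih₁ ih₂ => exact ih₁.trans _ ih₂
  | comm t r =>
    rw [atoms, atoms, add_comm]
    exact Multiset.rel_refl_of_refl_on fun x _ => ACEq.refl x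
  | assoc t r u =>
    rw [atoms, atoms, atoms, atoms, add_assoc]
    exact Multiset.rel_refl_of_refl_on fun x _ => ACEq.refl x
  | lamCong x h => exact .cons (.lamCong x h) .zero
  | appCong h₁ h₂ => exact .cons (.appCong h₁ h₂) .zero
  | smulCong a _ ih => exact ih
  | addCong _ _ ih₁ ih₂ => exact ih₁.add ih₂

end VTerm

open VTerm

section StrongNormalisation

variable {S : Type u} [CommRing S] {a b t r : VTerm S}

theorem Red1.of_aceq (h : ACEq a b) (hr : Red1 a r) : Red1 b r :=
  let ⟨f, hf⟩ := hr; ⟨f, .ac h.symm hf (.refl r)⟩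

theorem Red1.smul (c : S) (h : Red1 t r) : Red1 (smul c t) (smul c r) :=
  let ⟨f, hf⟩ := h; ⟨f, .smulCtx c hf⟩

theorem Red1.add_left (u : VTerm S) (h : Red1 t r) : Red1 (add t u) (add r u) :=
  let ⟨f, hf⟩ := h; ⟨f, .ac (.comm _ _) (.addCtx u hf) (.comm _ _)⟩

theorem Red1.add_right (u : VTerm S) (h : Red1 t r) : Red1 (add u t) (add u r) :=
  let ⟨f, hf⟩ := h; ⟨f, .addCtx u hf⟩

def IsSimulation (R : VTerm S → VTerm S → Prop) : Prop :=
  ∀ a b z, R a b → Red1 a z → ∃ z', Red1 b z' ∧ R z z'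

theorem isSimulation_aceq : IsSimulation (ACEq (S := S)) :=
  fun _ _ z h hz => ⟨z, hz.of_aceq h, .refl z⟩

theorem isSimulation_graph {g : VTerm S → VTerm S} (hg : ∀ a z, Red1 a z → Red1 (g a) (g z)) :
    IsSimulation fun x y => y = g x := by
  rintro a _ z rfl hz
  exact ⟨g z, hg a z hz, rfl⟩

theorem SN.of_simulation {R : VTerm S → VTerm S → Prop} (hR : IsSimulation R) (hab : R a b)
    (hb : SN b) : SN a := by
  induction hb generalizing a with
  | intro b _ ih =>
    refine Acc.intro a fun z hz => ?_
    obtain ⟨z', hz', hzz'⟩ := hR a b z hab hz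
    exact ih z' hz' hzz'

open Classical in
noncomputable def snRank (t : VTerm S) : Ordinal.{u} :=
  if h : SN t then Acc.rank (r := fun a b => Red1 b a) h else 0

theorem snRank_lt (ht : SN t) (hr : Red1 t r) : snRank r < snRank t := by
  rw [snRank, snRank, dif_pos ht, dif_pos (show SN r from ht.inv hr)]
  exact Acc.rank_lt_of_rel ht hr

theorem snRank_le_of_forall_lt (ht : SN t) {c : Ordinal.{u}}
    (H : ∀ z, Red1 t z → snRank z < c) : snRank t ≤ c := by
  rw [snRank, dif_pos ht, Acc.rank_eq (h := (ht : Acc (fun a b => Red1 b a) t))]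
  refine Ordinal.iSup_le fun ⟨z, hz⟩ => Order.succ_le_of_lt ?_
  simpa only [snRank, dif_pos (show SN z from ht.inv hz)] using H z hz

theorem snRank_le_of_simulation {R : VTerm S → VTerm S → Prop} (hR : IsSimulation R)
    (hab : R a b) (hb : SN b) : snRank a ≤ snRank b := by
  induction hb generalizing a with
  | intro b hb ih =>
    refine snRank_le_of_forall_lt (SN.of_simulation hR hab (Acc.intro b hb)) fun z hz => ?_
    obtain ⟨z', hz', hzz'⟩ := hR a b z hab hz
    exact (ih z' hz' hzz').trans_lt (snRank_lt (Acc.intro b hb) hz')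

theorem snRank_congr (h : ACEq a b) : snRank a = snRank b := by
  by_cases hb : SN b
  · have ha : SN a := SN.of_simulation isSimulation_aceq h hb
    exact le_antisymm (snRank_le_of_simulation isSimulation_aceq h hb)
      (snRank_le_of_simulation isSimulation_aceq h.symm ha)
  · have ha : ¬SN a := fun ha => hb (SN.of_simulation isSimulation_aceq h.symm ha)
    rw [snRank, snRank, dif_neg ha, dif_neg hb]

theorem sn_and_snRank_le_of_map {g : VTerm S → VTerm S}
    (hg : ∀ a z, Red1 a z → Red1 (g a) (g z)) (h : SN (g t)) :
    SN t ∧ snRank t ≤ snRank (g t) :=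
  ⟨SN.of_simulation (isSimulation_graph hg) rfl h,
    snRank_le_of_simulation (isSimulation_graph hg) rfl h⟩

theorem SN.sn_and_snRank_le_of_mem_atoms (ht : SN t) :
    ∀ l ∈ atoms t, SN l ∧ snRank l ≤ snRank t := by
  induction t with
  | var | lam | app =>
    intro l hl
    obtain rfl := Multiset.mem_singleton.1 hl
    exact ⟨ht, le_rfl⟩
  | zero => simp [atoms]
  | smul c u ih =>
    obtain ⟨hu, hle⟩ := sn_and_snRank_le_of_map (fun _ _ => Red1.smul c) ht
    exact fun l hl => (ih hu l hl).imp_right (·.trans hle)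
  | add u v ihu ihv =>
    obtain ⟨hu, hleu⟩ := sn_and_snRank_le_of_map (fun _ _ => Red1.add_left v) ht
    obtain ⟨hv, hlev⟩ := sn_and_snRank_le_of_map (fun _ _ => Red1.add_right u) ht
    intro l hl
    rcases Multiset.mem_add.1 hl with hl | hl
    · exact (ihu hu l hl).imp_right (·.trans hleu)
    · exact (ihv hv l hl).imp_right (·.trans hlev)

def AtomsSN (t : VTerm S) : Prop := ∀ l ∈ atoms t, SN l

theorem AtomsSN.of_sn (ht : SN t) : AtomsSN t := fun l hl =>
  (ht.sn_and_snRank_le_of_mem_atoms l hl).1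

theorem AtomsSN.congr (h : ACEq a b) (ha : AtomsSN a) : AtomsSN b := fun _ hl =>
  let ⟨l', hl', hll'⟩ := Multiset.exists_mem_of_rel_of_mem (rel_atoms_of_aceq h.symm) hl
  SN.of_simulation isSimulation_aceq hll' (ha l' hl')

theorem atomsSN_add : AtomsSN (add a b) ↔ AtomsSN a ∧ AtomsSN b := by
  simp only [AtomsSN, atoms, Multiset.mem_add, or_imp, forall_and]

noncomputable def atomRanks (t : VTerm S) : Multiset Ordinal.{u} := (atoms t).map snRank

theorem atomRanks_congr (h : ACEq a b) : atomRanks a = atomRanks b :=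
  Multiset.rel_eq.1 <| Multiset.rel_map.2 <| (rel_atoms_of_aceq h).mono fun _ _ _ _ => snRank_congr

def Decreases (r t : VTerm S) : Prop :=
  Prod.Lex IsDershowitzMannaLT (· < ·) (atomRanks r, weight r) (atomRanks t, weight t)

theorem wellFounded_decreases : WellFounded (Decreases (S := S)) :=
  InvImage.wf (fun t => (atomRanks t, weight t))
    (WellFounded.prod_lex Multiset.wellFounded_isDershowitzMannaLT wellFounded_lt)

theorem decreases_iff : Decreases r t ↔ IsDershowitzMannaLT (atomRanks r) (atomRanks t) ∨
    atomRanks r = atomRanks t ∧ weight r < weight t :=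
  Prod.lex_def

theorem Decreases.smul (c : S) (h : Decreases r t) : Decreases (smul c r) (smul c t) := by
  rw [decreases_iff] at h ⊢
  exact h.imp_right fun ⟨h₁, h₂⟩ => ⟨h₁, by simp only [weight]; omega⟩

theorem Decreases.add_right (u : VTerm S) (h : Decreases r t) :
    Decreases (add u r) (add u t) := by
  rw [decreases_iff] at h ⊢
  simp only [atomRanks, atoms, Multiset.map_add, weight] at h ⊢
  exact h.imp (·.add_left _) fun ⟨h₁, h₂⟩ => ⟨by rw [h₁], by omega⟩

theorem Decreases.congr {t' r' : VTerm S} (ht : ACEq t t') (hr : ACEq r' r)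
    (h : Decreases r' t') : Decreases r t := by
  rwa [Decreases, atomRanks_congr ht, weight_congr ht, ← atomRanks_congr hr, ← weight_congr hr]

theorem atomsSN_and_decreases_of_atoms_le (hle : atoms r ≤ atoms t) (hw : weight r < weight t)
    (ht : AtomsSN t) : AtomsSN r ∧ Decreases r t := by
  refine ⟨fun l hl => ht l (Multiset.mem_of_le hle hl), decreases_iff.2 ?_⟩
  rcases (Multiset.map_le_map (f := snRank) hle).eq_or_lt with heq | hlt
  · exact .inr ⟨heq, hw⟩
  · exact .inl (Multiset.isDershowitzMannaLT_of_lt hlt)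

theorem atomsSN_and_decreases_of_red_atom {f : Bool} (hat : atoms t = {t}) (ht : AtomsSN t)
    (h : Red f t r) : AtomsSN r ∧ Decreases r t := by
  have hsn : SN t := ht t (hat ▸ Multiset.mem_singleton_self t)
  have hsnr : SN r := hsn.inv ⟨f, h⟩
  refine ⟨.of_sn hsnr, decreases_iff.2 (.inl ?_)⟩
  rw [atomRanks, atomRanks, hat, Multiset.map_singleton]
  refine Multiset.isDershowitzMannaLT_singleton fun o ho => ?_
  obtain ⟨l, hl, rfl⟩ := Multiset.mem_map.1 ho
  exact (hsnr.sn_and_snRank_le_of_mem_atoms l hl).2.trans_lt (snRank_lt hsn ⟨f, h⟩)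

theorem Red.atomsSN_and_decreases {f : Bool} (h : Red f t r) (ht : AtomsSN t) :
    AtomsSN r ∧ Decreases r t := by
  induction h with
  | zeroSmul u | oneSmul u | smulSmul _ _ u | factor1 _ u =>
    have := one_le_weight u
    exact atomsSN_and_decreases_of_atoms_le (by simp [atoms]) (by simp only [weight]; omega) ht
  | smulZero | smulAdd | factor | factor2 | addZero =>
    exact atomsSN_and_decreases_of_atoms_le (by simp [atoms]) (by simp only [weight]; omega) ht
  | beta x u b hb => exact atomsSN_and_decreases_of_red_atom rfl ht (.beta x u b hb)
  | appAddL u v w => exact atomsSN_and_decreases_of_red_atom rfl ht (.appAddL u v w)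
  | appAddR u v w => exact atomsSN_and_decreases_of_red_atom rfl ht (.appAddR u v w)
  | appSmulL c u v => exact atomsSN_and_decreases_of_red_atom rfl ht (.appSmulL c u v)
  | appSmulR c u v => exact atomsSN_and_decreases_of_red_atom rfl ht (.appSmulR c u v)
  | appZeroL u => exact atomsSN_and_decreases_of_red_atom rfl ht (.appZeroL u)
  | appZeroR u => exact atomsSN_and_decreases_of_red_atom rfl ht (.appZeroR u)
  | appCtxR u h => exact atomsSN_and_decreases_of_red_atom rfl ht (.appCtxR u h)
  | appCtxL u h => exact atomsSN_and_decreases_of_red_atom rfl ht (.appCtxL u h)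
  | lamCtx x h => exact atomsSN_and_decreases_of_red_atom rfl ht (.lamCtx x h)
  | smulCtx c _ ih => exact (ih ht).imp id (·.smul c)
  | addCtx u _ ih =>
    obtain ⟨hu, hv⟩ := atomsSN_add.1 ht
    exact (ih hv).imp (atomsSN_add.2 ⟨hu, ·⟩) (·.add_right u)
  | ac h₁ _ h₃ ih =>
    exact (ih (ht.congr h₁)).imp (·.congr h₃) (·.congr h₁ h₃)

theorem AtomsSN.sn : AtomsSN t → SN t := by
  refine wellFounded_decreases.induction (C := fun t => AtomsSN t → SN t) t
    fun t ih ht => Acc.intro t fun r ⟨_, hr⟩ => ?_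
  obtain ⟨hr', hdec⟩ := hr.atomsSN_and_decreases ht
  exact ih r hdec hr'

end StrongNormalisation

/-- a linear (algebraic) combination of strongly normalising
terms is strongly normalising. -/
theorem sn_algebraic_context {S : Type} [CommRing S]
    (ts : List (VTerm S)) (h : ∀ t ∈ ts, SN t) (F : AlgCtx S) :
    SN (F.fill ts) := by
  refine AtomsSN.sn ?_
  induction F with
  | idx i =>
    rcases lt_or_ge i ts.length with hi | hi
    · rw [AlgCtx.fill, List.getD_eq_getElem _ _ hi]
      exact .of_sn (h _ (List.getElem_mem hi))
    · rw [AlgCtx.fill, List.getD_eq_default _ _ hi]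
      simp [AtomsSN, atoms]
  | add F G ihF ihG => exact atomsSN_add.2 ⟨ihF, ihG⟩
  | smul a F ih => exact ih
  | zero => simp [AtomsSN, AlgCtx.fill, atoms]
end

section
/- Arrows comparison: if V → R ≽^t_{𝒱,Γ} ∀X⃗.(U → T) (the ordering generated by ∀-introductions and ∀-eliminations at variables not free in Γ, together with type equivalence), then there exist types A⃗ and variables Y⃗ ∉ FV(Γ) such that U → T ≡ (V → R)[A⃗/Y⃗]. -/
/-!
Formalization of the vectorial λ-calculus (Arrighi, Díaz-Caro, Valiron):
syntax of types and terms, type equivalence, typing rules, reduction, etc.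
-/

universe u

/-!
The key observation is that `≡` cannot mix atoms (types that are not sums or scalar multiples)
with different heads: the set of heads occurring in a type and the coefficient of each head are
`≡`-invariants. Hence if a linear combination of unit types is equivalent to a single
`∀Z⃗.(V' → R')`, every summand is equivalent to it and the scalars sum to `1`. So along a chain
of `≻` steps starting from `V → R`, the types stay of the form `∀Z⃗.(V → R)[A⃗/Y⃗]`: a `∀`-introduction
extends `Z⃗`, and a `∀`-elimination strips the outermost variable of `Z⃗` and, unless that variable is
bound again further inside, appends it to `Y⃗`. Comparing the `∀`-prefixes at the end of the chain gives
the result.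
-/

namespace VType

variable {S : Type u}

def IsAtom : VType S → Prop
  | smul _ _ => False
  | add _ _ => False
  | _ => True

theorem IsUnit.isAtom {U : VType S} (h : U.IsUnit) : U.IsAtom := by
  cases h <;> trivial

theorem faMany_cons (Z : Bool × ℕ) (Zs : List (Bool × ℕ)) (W : VType S) :
    faMany (Z :: Zs) W = fa Z.1 Z.2 (faMany Zs W) := rfl

theorem isAtom_faMany_arrow (Zs : List (Bool × ℕ)) (A B : VType S) :
    (faMany Zs (arrow A B)).IsAtom := by
  cases Zs <;> trivial

theorem substT_faMany (v : Bool × ℕ) (A : VType S) (Zs : List (Bool × ℕ)) (W : VType S) :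
    substT (faMany Zs W) v A =
      if v ∈ Zs then faMany Zs W else faMany Zs (substT W v A) := by
  induction Zs with
  | nil => simp [faMany]
  | cons Z Zs ih =>
    by_cases hZ : v = Z
    · subst hZ
      simp [faMany_cons, substT]
    · simp only [faMany_cons, substT, ih, List.mem_cons, hZ, false_or]
      by_cases hv : v ∈ Zs <;> simp [hv]

theorem substMany_arrow (V R : VType S) (Ys : List (Bool × ℕ)) (As : List (VType S)) :
    substMany (arrow V R) Ys As = arrow (substMany V Ys As) (substMany R Ys As) := by
  unfold substMany
  induction Ys.zip As generalizing V R with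
  | nil => rfl
  | cons p l ih => exact ih _ _

theorem substMany_append_singleton (T : VType S) {Ys : List (Bool × ℕ)} {As : List (VType S)}
    (hlen : Ys.length = As.length) (X : Bool × ℕ) (A : VType S) :
    substMany T (Ys ++ [X]) (As ++ [A]) = substT (substMany T Ys As) X A := by
  unfold substMany
  rw [List.zip_append hlen, List.foldl_append]
  rfl

end VType

open VType

section Equivalence

variable {S : Type u} [CommRing S]

theorem TEq.substT {T R : VType S} (h : TEq T R) (v : Bool × ℕ) (A : VType S) :
    TEq (T.substT v A) (R.substT v A) := by
  induction h with
  | refl => exact TEq.refl _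
  | symm _ ih => exact ih.symm
  | trans _ _ ih₁ ih₂ => exact ih₁.trans ih₂
  | oneSmul => exact TEq.oneSmul _
  | smulSmul => exact TEq.smulSmul _ _ _
  | smulAdd => exact TEq.smulAdd _ _ _
  | addSmul => exact TEq.addSmul _ _ _
  | comm => exact TEq.comm _ _
  | assoc => exact TEq.assoc _ _ _
  | arrowCong _ _ ih₁ ih₂ => exact TEq.arrowCong ih₁ ih₂
  | faCong _ _ h ih =>
    simp only [VType.substT]
    split
    · exact TEq.faCong _ _ h
    · exact TEq.faCong _ _ ih
  | smulCong a _ ih => exact TEq.smulCong a ih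
  | addCong _ _ ih₁ ih₂ => exact TEq.addCong ih₁ ih₂

def TEq.setoid (S : Type u) [CommRing S] : Setoid (VType S) :=
  ⟨TEq, ⟨TEq.refl, TEq.symm, TEq.trans⟩⟩

theorem TEq.quotient_mk_eq_iff {T R : VType S} :
    Quotient.mk (TEq.setoid S) T = Quotient.mk _ R ↔ TEq T R :=
  ⟨Quotient.exact, fun h => Quotient.sound h⟩

inductive AtomHead (S : Type u) [CommRing S] : Type u where
  | var : Bool → ℕ → AtomHead S
  | arrow : Quotient (TEq.setoid S) → Quotient (TEq.setoid S) → AtomHead S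
  | fa : Bool → ℕ → Quotient (TEq.setoid S) → AtomHead S

namespace VType

/-- Meaningful on atoms only. -/
def head : VType S → AtomHead S
  | uvar n => .var true n
  | gvar n => .var false n
  | arrow U T => .arrow (Quotient.mk _ U) (Quotient.mk _ T)
  | fa b n U => .fa b n (Quotient.mk _ U)
  | smul _ _ => .var true 0
  | add _ _ => .var true 0

/-- Needed besides `coeff`, where summands with cancelling scalars are invisible. -/
def heads : VType S → Set (AtomHead S)
  | smul _ T => heads T
  | add T R => heads T ∪ heads R
  | W => {head W}

noncomputable def coeff : VType S → (AtomHead S →₀ S)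
  | smul a T => a • coeff T
  | add T R => coeff T + coeff R
  | W => Finsupp.single (head W) 1

theorem heads_of_isAtom {W : VType S} (h : W.IsAtom) : W.heads = {W.head} := by
  cases W <;> first | rfl | exact h.elim

theorem coeff_of_isAtom {W : VType S} (h : W.IsAtom) : W.coeff = Finsupp.single W.head 1 := by
  cases W <;> first | rfl | exact h.elim

theorem teq_of_head_eq {W B : VType S} (hW : W.IsAtom) (hB : B.IsAtom)
    (h : W.head = B.head) : TEq W B := by
  cases W <;> cases B <;> simp only [IsAtom] at hW hB <;>
    simp only [head, AtomHead.var.injEq, AtomHead.arrow.injEq, AtomHead.fa.injEq,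
      TEq.quotient_mk_eq_iff, reduceCtorEq, Bool.true_eq_false, Bool.false_eq_true,
      true_and, false_and] at h
  case arrow.arrow => exact TEq.arrowCong h.1 h.2
  case fa.fa => obtain ⟨rfl, rfl, h⟩ := h; exact TEq.faCong _ _ h
  all_goals subst h; exact TEq.refl _

end VType

theorem TEq.heads_eq {T R : VType S} (h : TEq T R) : T.heads = R.heads := by
  induction h with
  | refl | oneSmul | smulSmul | smulAdd => rfl
  | symm _ ih => exact ih.symm
  | trans _ _ ih₁ ih₂ => exact ih₁.trans ih₂
  | addSmul => exact Set.union_self _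
  | comm => exact Set.union_comm _ _
  | assoc => exact (Set.union_assoc _ _ _).symm
  | arrowCong h₁ h₂ =>
    simp only [heads, head, TEq.quotient_mk_eq_iff.2 h₁, TEq.quotient_mk_eq_iff.2 h₂]
  | faCong _ _ h =>
    simp only [heads, head, TEq.quotient_mk_eq_iff.2 h]
  | smulCong _ _ ih => exact ih
  | addCong _ _ ih₁ ih₂ => exact congrArg₂ (· ∪ ·) ih₁ ih₂

theorem TEq.coeff_eq {T R : VType S} (h : TEq T R) : T.coeff = R.coeff := by
  induction h with
  | refl => rfl
  | symm _ ih => exact ih.symm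
  | trans _ _ ih₁ ih₂ => exact ih₁.trans ih₂
  | oneSmul => exact one_smul _ _
  | smulSmul => exact (mul_smul _ _ _).symm
  | smulAdd => exact (smul_add _ _ _).symm
  | addSmul => exact (add_smul _ _ _).symm
  | comm => exact add_comm _ _
  | assoc => exact (add_assoc _ _ _).symm
  | arrowCong h₁ h₂ =>
    simp only [coeff, head, TEq.quotient_mk_eq_iff.2 h₁, TEq.quotient_mk_eq_iff.2 h₂]
  | faCong _ _ h =>
    simp only [coeff, head, TEq.quotient_mk_eq_iff.2 h]
  | smulCong a _ ih => exact congrArg (a • ·) ih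
  | addCong _ _ ih₁ ih₂ => exact congrArg₂ (· + ·) ih₁ ih₂

end Equivalence

section Atoms

variable {S : Type u} [CommRing S]

theorem TEq.head_eq {W B : VType S} (hW : W.IsAtom) (hB : B.IsAtom) (h : TEq W B) :
    W.head = B.head := by
  have hheads := h.heads_eq
  rwa [heads_of_isAtom hW, heads_of_isAtom hB, Set.singleton_eq_singleton_iff] at hheads

theorem TEq.fa_inj {X Z : Bool × ℕ} {W W' : VType S}
    (h : TEq (fa X.1 X.2 W) (fa Z.1 Z.2 W')) : X = Z ∧ TEq W W' := by
  have hhead := h.head_eq (by trivial) (by trivial)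
  simp only [head, AtomHead.fa.injEq, TEq.quotient_mk_eq_iff] at hhead
  exact ⟨Prod.ext hhead.1 hhead.2.1, hhead.2.2⟩

theorem TEq.not_fa_arrow {b : Bool} {n : ℕ} {W A B : VType S} : ¬TEq (fa b n W) (arrow A B) :=
  fun h => by simpa [head] using h.head_eq (by trivial) (by trivial)

theorem TEq.of_faMany_arrow {A B C D : VType S} :
    ∀ {Xs Zs : List (Bool × ℕ)}, TEq (faMany Xs (arrow A B)) (faMany Zs (arrow C D)) →
      TEq (arrow A B) (arrow C D)
  | [], [], h => h
  | [], _ :: _, h => (TEq.not_fa_arrow h.symm).elim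
  | _ :: _, [], h => (TEq.not_fa_arrow h).elim
  | _ :: _, _ :: _, h => TEq.of_faMany_arrow (TEq.fa_inj h).2

theorem heads_ssumL : ∀ {l : List (S × VType S)}, l ≠ [] →
    (ssumL l).heads = {x | ∃ p ∈ l, x ∈ p.2.heads}
  | [], h => (h rfl).elim
  | [p], _ => by ext; simp [ssumL, heads]
  | p :: q :: l, _ => by
    ext
    simp [ssumL, heads, heads_ssumL (List.cons_ne_nil q l)]

theorem ssumL_teq_smul_of_forall_teq {C : VType S} : ∀ {l : List (S × VType S)}, l ≠ [] →
    (∀ p ∈ l, TEq p.2 C) → TEq (ssumL l) (smul (l.map Prod.fst).sum C)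
  | [], h, _ => (h rfl).elim
  | [p], _, h => by simpa [ssumL] using TEq.smulCong p.1 (h p (by simp))
  | p :: q :: l, _, h => by
    have ih := ssumL_teq_smul_of_forall_teq (List.cons_ne_nil q l)
      (fun r hr => h r (List.mem_cons_of_mem _ hr))
    simpa [ssumL] using (TEq.addCong (TEq.smulCong p.1 (h p (by simp))) ih).trans
      (TEq.addSmul _ _ C)

theorem ssumL_teq_of_forall_teq {l : List (S × VType S)} {C : VType S} (hne : l ≠ [])
    (h : ∀ p ∈ l, TEq p.2 C) (hsum : (l.map Prod.fst).sum = 1) : TEq (ssumL l) C := by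
  have hsmul := ssumL_teq_smul_of_forall_teq hne h
  rw [hsum] at hsmul
  exact hsmul.trans (TEq.oneSmul C)

theorem forall_teq_of_ssumL_teq {l : List (S × VType S)} {B : VType S} (hne : l ≠ [])
    (hl : ∀ p ∈ l, p.2.IsAtom) (hB : B.IsAtom) (h : TEq (ssumL l) B) :
    (∀ p ∈ l, TEq p.2 B) ∧ (l.map Prod.fst).sum = 1 := by
  have hall : ∀ p ∈ l, TEq p.2 B := by
    intro p hp
    have hheads := h.heads_eq
    rw [heads_ssumL hne, heads_of_isAtom hB] at hheads
    refine teq_of_head_eq (hl p hp) hB (hheads.subset ⟨p, hp, ?_⟩)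
    rw [heads_of_isAtom (hl p hp)]
    rfl
  refine ⟨hall, ?_⟩
  have hcoeff := ((ssumL_teq_smul_of_forall_teq hne hall).symm.trans h).coeff_eq
  simp only [coeff, coeff_of_isAtom hB, Finsupp.smul_single, smul_eq_mul, mul_one] at hcoeff
  simpa using congrArg (· B.head) hcoeff

theorem ssumL_map_teq_of_ssumL_teq {f : VType S → VType S}
    (hf : ∀ {T R : VType S}, TEq T R → TEq (f T) (f R)) {l : List (S × VType S)} {B : VType S}
    (hne : l ≠ []) (hl : ∀ p ∈ l, p.2.IsAtom) (hB : B.IsAtom) (h : TEq (ssumL l) B) :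
    TEq (ssumL (l.map fun p => (p.1, f p.2))) (f B) := by
  obtain ⟨hall, hsum⟩ := forall_teq_of_ssumL_teq hne hl hB h
  refine ssumL_teq_of_forall_teq (by simpa using hne) ?_ (by simpa [Function.comp_def] using hsum)
  simp only [List.mem_map]
  rintro _ ⟨p, hp, rfl⟩
  exact hf (hall p hp)

theorem exists_cons_of_ssumL_map_fa_teq {X : Bool × ℕ} {l : List (S × VType S)}
    {Zs : List (Bool × ℕ)} {A B : VType S} (hne : l ≠ [])
    (h : TEq (ssumL (l.map fun p => (p.1, fa X.1 X.2 p.2))) (faMany Zs (arrow A B))) :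
    ∃ Zs', Zs = X :: Zs' ∧ TEq (ssumL l) (faMany Zs' (arrow A B)) := by
  obtain ⟨hall, hsum⟩ := forall_teq_of_ssumL_teq (by simpa using hne)
    (by simp only [List.mem_map]; rintro _ ⟨p, -, rfl⟩; trivial) (isAtom_faMany_arrow Zs A B) h
  have hsummand : ∀ p ∈ l, TEq (fa X.1 X.2 p.2) (faMany Zs (arrow A B)) :=
    fun p hp => hall _ (List.mem_map_of_mem hp)
  obtain ⟨p₀, hp₀⟩ := List.exists_mem_of_ne_nil l hne
  obtain _ | ⟨Z, Zs'⟩ := Zs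
  · exact (TEq.not_fa_arrow (hsummand p₀ hp₀)).elim
  refine ⟨Zs', by rw [(TEq.fa_inj (hsummand p₀ hp₀)).1], ?_⟩
  refine ssumL_teq_of_forall_teq hne (fun p hp => (TEq.fa_inj (hsummand p hp)).2) ?_
  simpa [Function.comp_def] using hsum

end Atoms

section Instances

variable {S : Type u}

def IsFreshInstance (Γ : Ctx S) (P W : VType S) : Prop :=
  ∃ (Ys : List (Bool × ℕ)) (As : List (VType S)),
    (∀ Y ∈ Ys, Y ∉ Γ.freeTV) ∧ Ys.length = As.length ∧
    (∀ pr ∈ Ys.zip As, VType.kindOK pr.1 pr.2) ∧ W = substMany P Ys As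

theorem IsFreshInstance.refl (Γ : Ctx S) (P : VType S) : IsFreshInstance Γ P P :=
  ⟨[], [], by simp, rfl, by simp, rfl⟩

theorem IsFreshInstance.substT {Γ : Ctx S} {P W : VType S} (h : IsFreshInstance Γ P W)
    {X : Bool × ℕ} (hX : X ∉ Γ.freeTV) {A : VType S} (hA : kindOK X A) :
    IsFreshInstance Γ P (W.substT X A) := by
  obtain ⟨Ys, As, hYs, hlen, hkind, rfl⟩ := h
  refine ⟨Ys ++ [X], As ++ [A], ?_, by simp [hlen], ?_,
    (substMany_append_singleton P hlen X A).symm⟩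
  · exact List.forall_mem_append.2 ⟨hYs, by simpa using hX⟩
  · rw [List.zip_append hlen]
    exact List.forall_mem_append.2 ⟨hkind, by simpa using hA⟩

theorem IsFreshInstance.exists_arrow {Γ : Ctx S} {V R W : VType S}
    (h : IsFreshInstance Γ (arrow V R) W) : ∃ A B, W = arrow A B := by
  obtain ⟨Ys, As, -, -, -, rfl⟩ := h
  exact ⟨_, _, substMany_arrow V R Ys As⟩

variable [CommRing S]

def IsForallInstance (Γ : Ctx S) (P Q : VType S) : Prop :=
  ∃ (Zs : List (Bool × ℕ)) (W : VType S), IsFreshInstance Γ P W ∧ TEq Q (faMany Zs W)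

theorem IsForallInstance.of_stepOrd {Γ : Ctx S} {t : VTerm S} {X : Bool × ℕ}
    {V R T T' : VType S} (hs : StepOrd Γ t X T T') (hT : IsForallInstance Γ (arrow V R) T) :
    IsForallInstance Γ (arrow V R) T' := by
  obtain ⟨Zs, W, hW, hTW⟩ := hT
  obtain ⟨A', B', rfl⟩ := hW.exists_arrow
  cases hs with
  | faI l hne hunit hX _ _ hTl hT'l =>
    refine ⟨X :: Zs, _, hW, hT'l.trans ?_⟩
    exact ssumL_map_teq_of_ssumL_teq (TEq.faCong X.1 X.2) hne (fun p hp => (hunit p hp).isAtom)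
      (isAtom_faMany_arrow Zs A' B') (hTl.symm.trans hTW)
  | faE l A hne hunit hA hX _ _ hTl hT'l =>
    obtain ⟨Zs, rfl, hl⟩ := exists_cons_of_ssumL_map_fa_teq hne (hTl.symm.trans hTW)
    have hT' := hT'l.trans (ssumL_map_teq_of_ssumL_teq (fun h => h.substT X A) hne
      (fun p hp => (hunit p hp).isAtom) (isAtom_faMany_arrow Zs A' B') hl)
    rw [substT_faMany] at hT'
    split_ifs at hT'
    · exact ⟨Zs, _, hW, hT'⟩
    · exact ⟨Zs, _, hW.substT hX hA, hT'⟩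

theorem IsForallInstance.of_tOrd {Γ : Ctx S} {t : VTerm S} {𝒱 : Set (Bool × ℕ)}
    {V R T T' : VType S} (h : TOrd Γ t 𝒱 T T') (hT : IsForallInstance Γ (arrow V R) T) :
    IsForallInstance Γ (arrow V R) T' := by
  induction h with
  | step hs => exact hT.of_stepOrd hs
  | trans _ _ ih₁ ih₂ => exact ih₂ (ih₁ hT)
  | ofEq _ hTT' =>
    obtain ⟨Zs, W, hW, hTW⟩ := hT
    exact ⟨Zs, W, hW, hTT'.symm.trans hTW⟩

end Instances

theorem arrows_comparison_general {S : Type} [CommRing S] (Γ : Ctx S) (t : VTerm S)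
    (𝒱 : Set (Bool × ℕ)) (V R U T : VType S) (Xs : List (Bool × ℕ))
    (h : TOrd Γ t 𝒱 (VType.arrow V R) (VType.faMany Xs (VType.arrow U T))) :
    ∃ (Ys : List (Bool × ℕ)) (As : List (VType S)),
      (∀ Y ∈ Ys, Y ∉ Γ.freeTV) ∧ Ys.length = As.length ∧
      (∀ pr ∈ Ys.zip As, VType.kindOK pr.1 pr.2) ∧
      TEq (VType.arrow U T) (VType.substMany (VType.arrow V R) Ys As) := by
  have hstart : IsForallInstance Γ (arrow V R) (arrow V R) :=
    ⟨[], _, IsFreshInstance.refl Γ _, TEq.refl _⟩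
  obtain ⟨Zs, W, ⟨Ys, As, hYs, hlen, hkind, rfl⟩, hW⟩ := hstart.of_tOrd h
  rw [substMany_arrow] at hW
  refine ⟨Ys, As, hYs, hlen, hkind, ?_⟩
  rw [substMany_arrow]
  exact TEq.of_faMany_arrow hW

/-- Arrows comparison. If V → R ≽^t_{𝒱,Γ} ∀X⃗.(U → T) then
U → T ≡ (V → R)[A⃗/Y⃗] for some types A⃗ and variables Y⃗ not free in Γ. -/
theorem arrows_comparison {S : Type} [CommRing S] (Γ : Ctx S) (t : VTerm S)
    (𝒱 : Set (Bool × ℕ)) (V R U T : VType S) (Xs : List (Bool × ℕ))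
    (hV : VType.IsUnit V) (hU : VType.IsUnit U)
    (h : TOrd Γ t 𝒱 (VType.arrow V R) (VType.faMany Xs (VType.arrow U T))) :
    ∃ (Ys : List (Bool × ℕ)) (As : List (VType S)),
      (∀ Y ∈ Ys, Y ∉ Γ.freeTV) ∧ Ys.length = As.length ∧
      (∀ pr ∈ Ys.zip As, VType.kindOK pr.1 pr.2) ∧
      TEq (VType.arrow U T) (VType.substMany (VType.arrow V R) Ys As) :=
  arrows_comparison_general Γ t 𝒱 V R U T Xs h
end
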